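/- Let u, v be two weight sequences, and suppose the weighted backward shifts B_u, B_v on 𝕂^{ℤ₊} admit invariant product probability measures m_u = ⊗_{n≥0} μ_{u,n} and m_v = ⊗_{n≥0} μ_{v,n}, both different from the Dirac mass at 0, such that the supports of μ_{u,n} and μ_{v,n} coincide for every n ≥ 0. Let S := supp(μ_{u,0}) = supp(μ_{v,0}). If S is compact, or if 0 ∉ S, then |u₁⋯u_n| = |v₁⋯v_n| for all n ≥ 1; consequently, if u and v are positive weight sequences, then u = v. -/

import Mathlib

/-!
Invariance of `m_w` under `B_w` makes each marginal a rescaling of the first one: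
`μ_n` is the image of `μ_0` under `t ↦ t / (w₁⋯w_n)`, so `supp μ_n = (w₁⋯w_n)⁻¹ S`.
Equal supports for `u` and `v` then make `S` invariant under multiplication by
`c = (v₁⋯v_n) / (u₁⋯u_n)` and by `c⁻¹`. As `m_u` is not the Dirac mass at `0`, `S` contains
some `s ≠ 0`. If `|c| ≠ 1`, one of the orbits `cᵏ s`, `c⁻ᵏ s` escapes to infinity, contradicting
compactness, and the other tends to `0`, which then lies in the closed set `S`.
-/

open MeasureTheory Filter
open scoped ENNReal

/-- The (topological) support of a Borel measure: the set of points all of whose open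
neighbourhoods have positive measure. -/
def measSupport {α : Type*} [TopologicalSpace α] [MeasurableSpace α]
    (μ : Measure α) : Set α :=
  {x | ∀ U : Set α, IsOpen U → x ∈ U → 0 < μ U}

/-- `μ` is the product measure on `𝕂^{ℤ₊}` with marginals `μn`. -/
def IsProductMeasure {𝕂 : Type*} [MeasurableSpace 𝕂]
    (μ : Measure (ℕ → 𝕂)) (μn : ℕ → Measure 𝕂) : Prop :=
  ∀ (N : ℕ) (A : ℕ → Set 𝕂), (∀ n, MeasurableSet (A n)) →
    μ {t | ∀ n ≤ N, t n ∈ A n} = ∏ n ∈ Finset.range (N + 1), μn n (A n)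

open Topology

theorem measSupport_eq_support {X : Type*} [TopologicalSpace X] [MeasurableSpace X]
    (μ : Measure X) : measSupport μ = μ.support := by
  ext x
  rw [(nhds_basis_opens x).mem_measureSupport]
  exact ⟨fun h U hU => h U hU.2 hU.1, fun h U hU hx => h U ⟨hx, hU⟩⟩

theorem Homeomorph.apply_mem_support_map_iff {X Y : Type*} [TopologicalSpace X]
    [MeasurableSpace X] [BorelSpace X] [TopologicalSpace Y] [MeasurableSpace Y] [BorelSpace Y]
    (e : X ≃ₜ Y) (μ : Measure X) (x : X) : e x ∈ (μ.map e).support ↔ x ∈ μ.support := by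
  have hbasis : (𝓝 (e x)).HasBasis (fun U => x ∈ U ∧ IsOpen U) (e '' ·) :=
    e.map_nhds_eq x ▸ (nhds_basis_opens x).map e
  rw [hbasis.mem_measureSupport, (nhds_basis_opens x).mem_measureSupport]
  simp only [e.measurableEmbedding.map_apply, e.preimage_image]

theorem eq_dirac_of_measure_compl_singleton {α : Type*} [MeasurableSpace α]
    [MeasurableSingletonClass α] {μ : Measure α} [IsProbabilityMeasure μ] {x : α}
    (h : μ {x}ᶜ = 0) : μ = Measure.dirac x := by
  have hx : μ {x} = 1 := (prob_compl_eq_zero_iff (measurableSet_singleton x)).1 h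
  rw [← Measure.restrict_eq_self_of_ae_mem (s := {x}) (μ := μ) (ae_iff.2 h),
    Measure.restrict_singleton, hx, one_smul]

theorem prod_Icc_ne_zero {M : Type*} [CommMonoidWithZero M] [NoZeroDivisors M] [Nontrivial M]
    {w : ℕ → M} (hw : ∀ n, 1 ≤ n → w n ≠ 0) (n : ℕ) : ∏ i ∈ Finset.Icc 1 n, w i ≠ 0 :=
  Finset.prod_ne_zero_iff.2 fun i hi => hw i (Finset.mem_Icc.1 hi).1

def weightedShift {𝕂 : Type*} [Mul 𝕂] (w : ℕ → 𝕂) (t : ℕ → 𝕂) : ℕ → 𝕂 :=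
  fun n => w (n + 1) * t (n + 1)

namespace IsProductMeasure

variable {𝕂 : Type*} [MeasurableSpace 𝕂] {m : Measure (ℕ → 𝕂)} {μn : ℕ → Measure 𝕂}

theorem map_eval (hprod : IsProductMeasure m μn) (hμn : ∀ n, IsProbabilityMeasure (μn n))
    (n : ℕ) : m.map (fun t => t n) = μn n := by
  classical
  ext A hA
  have hcyl : {t : ℕ → 𝕂 | ∀ k ≤ n, t k ∈ if k = n then A else Set.univ} =
      (fun t => t n) ⁻¹' A := by
    ext t
    refine ⟨fun h => by simpa using h n le_rfl, fun h k _ => ?_⟩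
    split_ifs with hk
    · exact hk ▸ h
    · trivial
  rw [Measure.map_apply (measurable_pi_apply n) hA, ← hcyl,
    hprod n _ fun k => by split_ifs <;> simp [hA],
    Finset.prod_eq_single_of_mem n (by simp) fun k _ hk => by simp [hk]]
  simp

theorem eq_dirac [MeasurableSingletonClass 𝕂] [IsProbabilityMeasure m]
    (hprod : IsProductMeasure m μn) (hμn : ∀ n, IsProbabilityMeasure (μn n)) {x : ℕ → 𝕂}
    (hx : ∀ n, μn n {x n}ᶜ = 0) : m = Measure.dirac x := by
  have hcompl : ({x}ᶜ : Set (ℕ → 𝕂)) = ⋃ n, (fun t => t n) ⁻¹' {x n}ᶜ := by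
    ext t
    simp [funext_iff]
  refine eq_dirac_of_measure_compl_singleton ?_
  rw [hcompl]
  refine measure_iUnion_null fun n => ?_
  rw [← Measure.map_apply (measurable_pi_apply n) (measurableSet_singleton _).compl,
    hprod.map_eval hμn, hx]

variable [CommMonoid 𝕂] [MeasurableMul 𝕂] {w : ℕ → 𝕂}

theorem map_mul_left_succ (hprod : IsProductMeasure m μn)
    (hμn : ∀ n, IsProbabilityMeasure (μn n))
    (hinv : ∀ B, MeasurableSet B → m (weightedShift w ⁻¹' B) = m B) (n : ℕ) :
    (μn (n + 1)).map (w (n + 1) * ·) = μn n := by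
  have hshift : Measurable (weightedShift w) :=
    measurable_pi_iff.2 fun k => (measurable_pi_apply (k + 1)).const_mul _
  have hm : m.map (weightedShift w) = m :=
    Measure.ext fun B hB => by rw [Measure.map_apply hshift hB, hinv B hB]
  calc (μn (n + 1)).map (w (n + 1) * ·)
      = (m.map fun t => t (n + 1)).map (w (n + 1) * ·) := by rw [hprod.map_eval hμn]
    _ = m.map fun t => weightedShift w t n :=
      Measure.map_map (measurable_const_mul _) (measurable_pi_apply _)
    _ = (m.map (weightedShift w)).map fun t => t n :=
      (Measure.map_map (measurable_pi_apply n) hshift).symm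
    _ = μn n := by rw [hm, hprod.map_eval hμn]

theorem map_mul_prod_Icc (hprod : IsProductMeasure m μn)
    (hμn : ∀ n, IsProbabilityMeasure (μn n))
    (hinv : ∀ B, MeasurableSet B → m (weightedShift w ⁻¹' B) = m B) (n : ℕ) :
    (μn n).map ((∏ i ∈ Finset.Icc 1 n, w i) * ·) = μn 0 := by
  induction n with
  | zero => simp
  | succ n ih =>
    rw [Finset.prod_Icc_succ_top (by omega), ← ih, ← hprod.map_mul_left_succ hμn hinv n,
      Measure.map_map (measurable_const_mul _) (measurable_const_mul _)]
    congr 1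
    ext s
    simp [mul_assoc]

end IsProductMeasure

section NormedField

variable {𝕜 : Type*} [NormedField 𝕜]

theorem norm_le_one_of_mapsTo_mul_left {S : Set 𝕜} (hS : Bornology.IsBounded S) {s₀ : 𝕜}
    (hs₀ : s₀ ∈ S) (hs₀0 : s₀ ≠ 0) {c : 𝕜} (hc : Set.MapsTo (c * ·) S S) : ‖c‖ ≤ 1 := by
  obtain ⟨R, hR⟩ := hS.exists_norm_le
  by_contra! h1
  obtain ⟨n, hn⟩ := pow_unbounded_of_one_lt (R / ‖s₀‖) h1
  have hpow : ‖c‖ ^ n * ‖s₀‖ ≤ R := by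
    simpa [mul_left_iterate_apply] using hR _ (hc.iterate n hs₀)
  exact hn.not_ge ((le_div_iff₀ (norm_pos_iff.2 hs₀0)).2 hpow)

theorem one_le_norm_of_mapsTo_mul_left {S : Set 𝕜} (hS : IsClosed S) (h0 : (0 : 𝕜) ∉ S)
    {s₀ : 𝕜} (hs₀ : s₀ ∈ S) {c : 𝕜} (hc : Set.MapsTo (c * ·) S S) : 1 ≤ ‖c‖ := by
  by_contra! h1
  have hlim : Tendsto (fun n : ℕ => c ^ n * s₀) atTop (𝓝 0) := by
    simpa using (tendsto_pow_atTop_nhds_zero_of_norm_lt_one h1).mul_const s₀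
  refine h0 (hS.mem_of_tendsto hlim (Eventually.of_forall fun n => ?_))
  simpa [mul_left_iterate_apply] using hc.iterate n hs₀

theorem mapsTo_mul_left_of_mul_mem_iff {S : Set 𝕜} {a b : 𝕜} (ha : a ≠ 0)
    (hab : ∀ x, a * x ∈ S ↔ b * x ∈ S) : Set.MapsTo ((b * a⁻¹) * ·) S S := fun s hs => by
  simpa [mul_assoc] using (hab (a⁻¹ * s)).1 (by rwa [mul_inv_cancel_left₀ ha])

theorem norm_eq_of_mul_mem_iff {S : Set 𝕜} (hS_closed : IsClosed S) {s₀ : 𝕜}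
    (hs₀ : s₀ ∈ S) (hs₀0 : s₀ ≠ 0) (hS : IsCompact S ∨ (0 : 𝕜) ∉ S) {a b : 𝕜} (ha : a ≠ 0)
    (hb : b ≠ 0) (hab : ∀ x, a * x ∈ S ↔ b * x ∈ S) : ‖a‖ = ‖b‖ := by
  have hmaps_ba := mapsTo_mul_left_of_mul_mem_iff ha hab
  have hmaps_ab := mapsTo_mul_left_of_mul_mem_iff hb fun x => (hab x).symm
  have ha_pos : 0 < ‖a‖ := norm_pos_iff.2 ha
  have hb_pos : 0 < ‖b‖ := norm_pos_iff.2 hb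
  simp only [← div_eq_mul_inv] at hmaps_ba hmaps_ab
  rcases hS with hS_cpt | h0
  · have hba_le := norm_le_one_of_mapsTo_mul_left hS_cpt.isBounded hs₀ hs₀0 hmaps_ba
    have hab_le := norm_le_one_of_mapsTo_mul_left hS_cpt.isBounded hs₀ hs₀0 hmaps_ab
    rw [norm_div, div_le_one ha_pos] at hba_le
    rw [norm_div, div_le_one hb_pos] at hab_le
    exact le_antisymm hab_le hba_le
  · have hba_ge := one_le_norm_of_mapsTo_mul_left hS_closed h0 hs₀ hmaps_ba
    have hab_ge := one_le_norm_of_mapsTo_mul_left hS_closed h0 hs₀ hmaps_ab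
    rw [norm_div, one_le_div ha_pos] at hba_ge
    rw [norm_div, one_le_div hb_pos] at hab_ge
    exact le_antisymm hba_ge hab_ge

theorem norm_eq_of_forall_norm_prod_Icc_eq {u v : ℕ → 𝕜} (hv : ∀ n, 1 ≤ n → v n ≠ 0)
    (h : ∀ n, ‖∏ i ∈ Finset.Icc 1 n, u i‖ = ‖∏ i ∈ Finset.Icc 1 n, v i‖) (n : ℕ) (hn : 1 ≤ n) :
    ‖u n‖ = ‖v n‖ := by
  obtain ⟨m, rfl⟩ := Nat.exists_eq_add_of_le' hn
  have hsucc := h (m + 1)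
  rw [Finset.prod_Icc_succ_top (by omega), Finset.prod_Icc_succ_top (by omega), norm_mul,
    norm_mul, h m] at hsucc
  exact mul_left_cancel₀ (norm_ne_zero_iff.2 (prod_Icc_ne_zero hv m)) hsucc

variable [MeasurableSpace 𝕜] [BorelSpace 𝕜] {m : Measure (ℕ → 𝕜)} {μn : ℕ → Measure 𝕜}
  {w : ℕ → 𝕜}

theorem IsProductMeasure.mem_support_iff_mul_mem (hprod : IsProductMeasure m μn)
    (hμn : ∀ n, IsProbabilityMeasure (μn n))
    (hinv : ∀ B, MeasurableSet B → m (weightedShift w ⁻¹' B) = m B)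
    (hw : ∀ n, 1 ≤ n → w n ≠ 0) (n : ℕ) (x : 𝕜) :
    x ∈ (μn n).support ↔ (∏ i ∈ Finset.Icc 1 n, w i) * x ∈ (μn 0).support := by
  rw [← hprod.map_mul_prod_Icc hμn hinv n]
  exact ((Homeomorph.mulLeft₀ _ (prod_Icc_ne_zero hw n)).apply_mem_support_map_iff _ x).symm

theorem IsProductMeasure.exists_ne_zero_mem_support [HereditarilyLindelofSpace 𝕜]
    [IsProbabilityMeasure m] (hprod : IsProductMeasure m μn)
    (hμn : ∀ n, IsProbabilityMeasure (μn n))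
    (hinv : ∀ B, MeasurableSet B → m (weightedShift w ⁻¹' B) = m B)
    (hw : ∀ n, 1 ≤ n → w n ≠ 0) (hm : m ≠ Measure.dirac 0) :
    ∃ s ∈ (μn 0).support, s ≠ 0 := by
  by_contra! h0
  refine hm (hprod.eq_dirac hμn fun n => measure_mono_null ?_ (μn n).measure_compl_support)
  intro x hx hx_supp
  have hPx := h0 _ ((hprod.mem_support_iff_mul_mem hμn hinv hw n x).1 hx_supp)
  exact hx (by simpa [prod_Icc_ne_zero hw n] using hPx)

end NormedField

theorem eq_norms_of_same_support_product_measures_general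
    {𝕂 : Type*} [RCLike 𝕂] [MeasurableSpace 𝕂] [BorelSpace 𝕂]
    (u v : ℕ → 𝕂) (hu0 : ∀ n, 1 ≤ n → u n ≠ 0) (hv0 : ∀ n, 1 ≤ n → v n ≠ 0)
    (μun μvn : ℕ → Measure 𝕂)
    (hμun : ∀ n, IsProbabilityMeasure (μun n)) (hμvn : ∀ n, IsProbabilityMeasure (μvn n))
    (mu mv : Measure (ℕ → 𝕂)) [IsProbabilityMeasure mu]
    (hmu_prod : IsProductMeasure mu μun) (hmv_prod : IsProductMeasure mv μvn)
    (hmu_inv : ∀ B : Set (ℕ → 𝕂), MeasurableSet B →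
        mu ((fun t (n : ℕ) => u (n + 1) * t (n + 1)) ⁻¹' B) = mu B)
    (hmv_inv : ∀ B : Set (ℕ → 𝕂), MeasurableSet B →
        mv ((fun t (n : ℕ) => v (n + 1) * t (n + 1)) ⁻¹' B) = mv B)
    (hmu_ne : mu ≠ Measure.dirac 0)
    (hsupp : ∀ n, measSupport (μun n) = measSupport (μvn n))
    (hS : IsCompact (measSupport (μun 0)) ∨ (0 : 𝕂) ∉ measSupport (μun 0)) :
    (∀ n : ℕ, 1 ≤ n →
        ‖∏ i ∈ Finset.Icc 1 n, u i‖ = ‖∏ i ∈ Finset.Icc 1 n, v i‖) ∧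
    ((∀ n : ℕ, 1 ≤ n → u n = (‖u n‖ : 𝕂) ∧ v n = (‖v n‖ : 𝕂)) →
        ∀ n : ℕ, 1 ≤ n → u n = v n) := by
  simp only [measSupport_eq_support] at hsupp hS
  obtain ⟨s₀, hs₀, hs₀0⟩ := hmu_prod.exists_ne_zero_mem_support hμun hmu_inv hu0 hmu_ne
  have hnorm : ∀ n, ‖∏ i ∈ Finset.Icc 1 n, u i‖ = ‖∏ i ∈ Finset.Icc 1 n, v i‖ := fun n =>
    norm_eq_of_mul_mem_iff Measure.isClosed_support hs₀ hs₀0 hS (prod_Icc_ne_zero hu0 n)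
      (prod_Icc_ne_zero hv0 n) fun x => by
        rw [← hmu_prod.mem_support_iff_mul_mem hμun hmu_inv hu0, hsupp n,
          hmv_prod.mem_support_iff_mul_mem hμvn hmv_inv hv0, hsupp 0]
  refine ⟨fun n _ => hnorm n, fun hpos n hn => ?_⟩
  rw [(hpos n hn).1, (hpos n hn).2, norm_eq_of_forall_norm_prod_Icc_eq hv0 hnorm n hn]

/-- Suppose `B_u`, `B_v` admit non-trivial invariant product probability
measures `m_u = ⊗ μ_{u,n}`, `m_v = ⊗ μ_{v,n}` on `𝕂^{ℤ₊}` such that `supp μ_{u,n} = supp μ_{v,n}`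
for all `n`. If `S = supp μ_{u,0}` is compact or `0 ∉ S`, then `|u₁⋯u_n| = |v₁⋯v_n|` for all
`n ≥ 1`; consequently, if the weights are positive then `u = v`. -/
theorem eq_norms_of_same_support_product_measures
    {𝕂 : Type*} [RCLike 𝕂] [MeasurableSpace 𝕂] [BorelSpace 𝕂]
    (u v : ℕ → 𝕂) (hu0 : ∀ n, 1 ≤ n → u n ≠ 0) (hv0 : ∀ n, 1 ≤ n → v n ≠ 0)
    (hubdd : ∃ M : ℝ, ∀ n, ‖u n‖ ≤ M) (hvbdd : ∃ M : ℝ, ∀ n, ‖v n‖ ≤ M)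
    (μun μvn : ℕ → Measure 𝕂)
    (hμun : ∀ n, IsProbabilityMeasure (μun n)) (hμvn : ∀ n, IsProbabilityMeasure (μvn n))
    (mu mv : Measure (ℕ → 𝕂)) [IsProbabilityMeasure mu] [IsProbabilityMeasure mv]
    (hmu_prod : IsProductMeasure mu μun) (hmv_prod : IsProductMeasure mv μvn)
    (hmu_inv : ∀ B : Set (ℕ → 𝕂), MeasurableSet B →
        mu ((fun t (n : ℕ) => u (n + 1) * t (n + 1)) ⁻¹' B) = mu B)
    (hmv_inv : ∀ B : Set (ℕ → 𝕂), MeasurableSet B →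
        mv ((fun t (n : ℕ) => v (n + 1) * t (n + 1)) ⁻¹' B) = mv B)
    (hmu_ne : mu ≠ Measure.dirac 0) (hmv_ne : mv ≠ Measure.dirac 0)
    (hsupp : ∀ n, measSupport (μun n) = measSupport (μvn n))
    (hS : IsCompact (measSupport (μun 0)) ∨ (0 : 𝕂) ∉ measSupport (μun 0)) :
    (∀ n : ℕ, 1 ≤ n →
        ‖∏ i ∈ Finset.Icc 1 n, u i‖ = ‖∏ i ∈ Finset.Icc 1 n, v i‖) ∧
    ((∀ n : ℕ, 1 ≤ n → u n = (‖u n‖ : 𝕂) ∧ v n = (‖v n‖ : 𝕂)) →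
        ∀ n : ℕ, 1 ≤ n → u n = v n) :=
  eq_norms_of_same_support_product_measures_general u v hu0 hv0 μun μvn hμun hμvn mu mv hmu_prod
    hmv_prod hmu_inv hmv_inv hmu_ne hsupp hS
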